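/- arXiv:1002.4598 — 3 statements merged into one kernel-verified Lean document; each statement's English description precedes it below -/
import Mathlib

section
/- If α is a morphism on {a,b}* with α(a) = a^p b, α(b) = a^{p'} b (p,p' ≥ 1, |p−p'| = 1), and g is a primitive binary word, then α(g) is primitive. -/
/-- `listPow h m` is the word `h` repeated `m` times. -/
def listPow (h : List Bool) (m : ℕ) : List Bool := (List.replicate m h).flatten

/-- A word is primitive if it is not `h^m` for any word `h` and integer `m ≥ 2`. -/
def Primitive (g : List Bool) : Prop := ∀ h m, 2 ≤ m → g ≠ listPow h m

/-- The Sturmian morphism on letters: `a ↦ a^p b`, `b ↦ a^{p'} b`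
(`a` is `false`, `b` is `true`). -/
def alphaMap (p p' : ℕ) : Bool → List Bool
  | false => List.replicate p false ++ [true]
  | true  => List.replicate p' false ++ [true]

/-- The Sturmian morphism extended to words. -/
def alpha (p p' : ℕ) (w : List Bool) : List Bool := w.flatMap (alphaMap p p')

/-- A valid parameter pair: `p, p' ≥ 1` and `|p − p'| = 1`. -/
def ValidPair (p p' : ℕ) : Prop := 1 ≤ p ∧ 1 ≤ p' ∧ (p = p' + 1 ∨ p' = p + 1)

/-- A finite binary word is balanced if any two equal-length factors have
`b`-counts differing by at most 1. -/
def BalancedFin (w : List Bool) : Prop :=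
  ∀ u v : List Bool, u <:+: w → v <:+: w → u.length = v.length →
    u.count true ≤ v.count true + 1

/-- The factor of the infinite word `w` of length `n` starting at position `i`. -/
def infFactorAt (w : ℕ → Bool) (i n : ℕ) : List Bool :=
  (List.range n).map (fun k => w (i + k))

/-- `u` is a factor of the infinite word `w`. -/
def InfFactor (u : List Bool) (w : ℕ → Bool) : Prop :=
  ∃ i, u = infFactorAt w i u.length

/-- An infinite binary word is balanced if any two equal-length factors have
`b`-counts differing by at most 1. -/
def BalancedInf (w : ℕ → Bool) : Prop :=
  ∀ u v : List Bool, InfFactor u w → InfFactor v w → u.length = v.length →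
    u.count true ≤ v.count true + 1

/-- Ultimately periodic infinite word. -/
def UltPeriodic (w : ℕ → Bool) : Prop :=
  ∃ N q, 1 ≤ q ∧ ∀ n, N ≤ n → w (n + q) = w n

/-! Reading `alpha p p' g` from left to right, every `true` closes the image of one letter of `g`,
and since `p ≠ p'` the number of `false`s before it tells which letter it was. This decoder is
multiplicative across any cut just after a `true`. If `alpha g = w ^ m`, then `w` ends in `true`
like `alpha g` does, so decoding gives `g = (decode w) ^ m`. -/

/-- `k` counts the `false`s read since the last `true`. -/
def alphaDecodeFrom (p : ℕ) : ℕ → List Bool → List Bool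
  | _, [] => []
  | k, false :: w => alphaDecodeFrom p (k + 1) w
  | k, true :: w => decide (k ≠ p) :: alphaDecodeFrom p 0 w

def alphaDecode (p : ℕ) (w : List Bool) : List Bool := alphaDecodeFrom p 0 w

lemma alphaDecodeFrom_replicate_false_append (p k n : ℕ) (w : List Bool) :
    alphaDecodeFrom p k (List.replicate n false ++ w) = alphaDecodeFrom p (k + n) w := by
  induction n generalizing k with
  | zero => rfl
  | succ n ih =>
    rw [List.replicate_succ, List.cons_append, alphaDecodeFrom, ih]
    ac_rfl

lemma alphaDecode_alpha {p p' : ℕ} (hne : p ≠ p') (g : List Bool) :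
    alphaDecode p (alpha p p' g) = g := by
  induction g with
  | nil => rfl
  | cons c g ih =>
    cases c <;>
      simpa [alphaDecode, alpha, alphaMap, alphaDecodeFrom_replicate_false_append,
        alphaDecodeFrom, Ne.symm hne] using ih

lemma alphaDecodeFrom_append_true_append (p k : ℕ) (u v : List Bool) :
    alphaDecodeFrom p k (u ++ true :: v) =
      alphaDecodeFrom p k (u ++ [true]) ++ alphaDecode p v := by
  induction u generalizing k with
  | nil => simp [alphaDecodeFrom, alphaDecode]
  | cons c u ih => cases c <;> simp [alphaDecodeFrom, ih]

lemma alphaDecode_append {p : ℕ} {u : List Bool} (hu : u.getLast? ≠ some false)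
    (v : List Bool) : alphaDecode p (u ++ v) = alphaDecode p u ++ alphaDecode p v := by
  rcases List.eq_nil_or_concat u with rfl | ⟨u, b, rfl⟩
  · rfl
  · cases b
    · simp at hu
    · simpa [alphaDecode] using alphaDecodeFrom_append_true_append p 0 u v

lemma listPow_succ (w : List Bool) (m : ℕ) : listPow w (m + 1) = w ++ listPow w m := by
  simp [listPow, List.replicate_succ]

lemma alphaDecode_listPow {p : ℕ} {w : List Bool} (hw : w.getLast? ≠ some false) (m : ℕ) :
    alphaDecode p (listPow w m) = listPow (alphaDecode p w) m := by
  induction m with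
  | zero => rfl
  | succ m ih => rw [listPow_succ, alphaDecode_append hw, ih, listPow_succ]

lemma getLast?_listPow_of_getLast? {w : List Bool} {b : Bool} (hw : w.getLast? = some b)
    {m : ℕ} (hm : m ≠ 0) : (listPow w m).getLast? = some b := by
  obtain ⟨m, rfl⟩ := Nat.exists_eq_succ_of_ne_zero hm
  simp [listPow, List.replicate_succ', hw]

lemma getLast?_alpha_ne_false (p p' : ℕ) (g : List Bool) :
    (alpha p p' g).getLast? ≠ some false := by
  induction g with
  | nil => simp [alpha]
  | cons c g ih =>
    have hc : (alphaMap p p' c).getLast? = some true := by cases c <;> simp [alphaMap]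
    simp only [alpha, List.flatMap_cons, List.getLast?_append] at ih ⊢
    cases h : (g.flatMap (alphaMap p p')).getLast? <;> simp_all

/-- the Sturmian morphism preserves primitivity. -/
theorem stmt1 (p p' : ℕ) (h : ValidPair p p') (g : List Bool) (hg : Primitive g) :
    Primitive (alpha p p' g) := by
  intro w m hm hgw
  have hne : p ≠ p' := by obtain ⟨-, -, h | h⟩ := h <;> omega
  have hw : w.getLast? ≠ some false := fun hw =>
    getLast?_alpha_ne_false p p' g (hgw ▸ getLast?_listPow_of_getLast? hw (by omega))
  exact hg (alphaDecode p w) m hm <| by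
    rw [← alphaDecode_alpha hne g, hgw, alphaDecode_listPow hw]
end

section
/- Let S be the image under α (α(a) = a^p b, α(b) = a^{p'} b, p,p' ≥ 1, |p−p'| = 1) of a balanced binary word u. If g^3 is a factor of S with g primitive and |g| ≥ 2, then g^3 has a cyclic shift whose period is block-complete; consequently, u itself contains a square h^2 with α(h) a cyclic conjugate of g. -/
theorem List.eq_nil_of_replicate_false_append_true {k : ℕ} {w c : List Bool}
    (hwc : List.replicate k false ++ [true] = w ++ true :: c) : c = [] := by
  rcases List.eq_nil_or_concat' c with rfl | ⟨c', b, rfl⟩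
  · rfl
  · rw [← List.cons_append, ← List.append_assoc] at hwc
    have hmem : true ∈ List.replicate k false := (List.append_inj' hwc rfl).1 ▸ by simp
    simp at hmem

theorem listPow_singleton (a : Bool) (n : ℕ) : listPow [a] n = List.replicate n a :=
  List.flatten_replicate_singleton

theorem listPow_three (g : List Bool) : listPow g 3 = g ++ g ++ g := by
  simp [listPow, List.replicate_succ]

theorem Primitive.true_mem {g : List Bool} (hg : Primitive g) (hlen : 2 ≤ g.length) :
    true ∈ g := by
  by_contra hmem
  have hfalse : g = List.replicate g.length false :=
    List.eq_replicate_of_mem fun b hb => by cases b <;> simp_all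
  exact hg [false] g.length hlen (hfalse.trans (listPow_singleton false _).symm)

theorem alphaMap_eq_replicate_append (p p' : ℕ) (c : Bool) :
    ∃ k, alphaMap p p' c = List.replicate k false ++ [true] := by
  cases c <;> exact ⟨_, rfl⟩

section Alpha

variable {p p' : ℕ}

@[simp]
theorem alpha_nil : alpha p p' [] = [] := rfl

@[simp]
theorem alpha_cons (c : Bool) (u : List Bool) :
    alpha p p' (c :: u) = alphaMap p p' c ++ alpha p p' u := rfl

@[simp]
theorem alpha_append (u v : List Bool) :
    alpha p p' (u ++ v) = alpha p p' u ++ alpha p p' v :=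
  List.flatMap_append

@[simp]
theorem alphaMap_ne_nil (c : Bool) : alphaMap p p' c ≠ [] := by
  cases c <;> simp [alphaMap]

theorem alphaMap_eq_append_true_cons {c : Bool} {w t : List Bool}
    (h : alphaMap p p' c = w ++ true :: t) : t = [] := by
  obtain ⟨k, hk⟩ := alphaMap_eq_replicate_append p p' c
  exact List.eq_nil_of_replicate_false_append_true (hk ▸ h)

theorem alphaMap_injective (hne : p ≠ p') : Function.Injective (alphaMap p p') := by
  intro c d hcd
  have hlen := congrArg List.length hcd
  cases c <;> cases d <;> simp_all [alphaMap]

theorem alphaMap_eq_append_eq_nil {c d : Bool} {t : List Bool}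
    (h : alphaMap p p' d = alphaMap p p' c ++ t) : t = [] := by
  obtain ⟨k, hk⟩ := alphaMap_eq_replicate_append p p' c
  rw [hk, List.append_assoc, List.singleton_append] at h
  exact alphaMap_eq_append_true_cons h

theorem alphaMap_eq_of_append_eq {c d : Bool} {r s : List Bool}
    (h : alphaMap p p' c ++ r = alphaMap p p' d ++ s) : alphaMap p p' c = alphaMap p p' d := by
  rcases List.append_eq_append_iff.1 h with ⟨as, hd, -⟩ | ⟨bs, hc, -⟩
  · rw [hd, alphaMap_eq_append_eq_nil hd, List.append_nil]
  · rw [hc, alphaMap_eq_append_eq_nil hc, List.append_nil]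

theorem alpha_injective (hne : p ≠ p') : Function.Injective (alpha p p') := by
  intro u
  induction u with
  | nil => rintro (_ | ⟨d, v⟩) h <;> simp_all
  | cons c u ih =>
    rintro (_ | ⟨d, v⟩) h
    · simp at h
    · rw [alpha_cons, alpha_cons] at h
      have hcd := alphaMap_eq_of_append_eq h
      rw [alphaMap_injective hne hcd, ih (List.append_cancel_left (hcd ▸ h))]

theorem alpha_eq_append_true_cons {u w t : List Bool} (h : alpha p p' u = w ++ true :: t) :
    ∃ u₁ u₂, u = u₁ ++ u₂ ∧ alpha p p' u₁ = w ++ [true] ∧ alpha p p' u₂ = t := by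
  induction u generalizing w with
  | nil => simp at h
  | cons c u ih =>
    rw [alpha_cons, ← List.singleton_append, ← List.append_assoc] at h
    rcases List.append_eq_append_iff.1 h with ⟨as, hw, hu⟩ | ⟨bs, hc, ht⟩
    · rcases List.eq_nil_or_concat' as with rfl | ⟨as', b, rfl⟩
      · exact ⟨[c], u, rfl, by simpa using hw.symm, by simpa using hu⟩
      · rw [← List.append_assoc] at hw
        obtain ⟨hw, hb⟩ := List.append_inj' hw rfl
        obtain ⟨u₁, u₂, rfl, h₁, h₂⟩ := ih (w := as') (by simpa [← hb] using hu)
        exact ⟨c :: u₁, u₂, rfl, by simp [hw, h₁], h₂⟩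
    · rw [List.append_assoc, List.singleton_append] at hc
      obtain rfl := alphaMap_eq_append_true_cons hc
      exact ⟨[c], u, rfl, by simpa using hc, by simpa using ht.symm⟩

end Alpha

theorem stmt10_general (p p' : ℕ) (h : ValidPair p p') (u g : List Bool)
    (hgprim : Primitive g) (hlen : 2 ≤ g.length)
    (hfac : listPow g 3 <:+: alpha p p' u) :
    ∃ x y hh : List Bool, g = x ++ y ∧ alpha p p' hh = y ++ x ∧
      (hh ++ hh) <:+: u := by
  have hne : p ≠ p' := by obtain ⟨-, -, hpp' | hpp'⟩ := h <;> omega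
  obtain ⟨x, y, rfl⟩ := List.append_of_mem (hgprim.true_mem hlen)
  obtain ⟨s, t, hst⟩ := hfac
  have hcube : alpha p p' u =
      (s ++ x) ++ true :: ((y ++ x) ++ true :: ((y ++ x) ++ true :: (y ++ t))) := by
    simp [← hst, listPow_three]
  obtain ⟨u₀, u₁, rfl, -, h₁⟩ := alpha_eq_append_true_cons hcube
  obtain ⟨hh, u₂, rfl, hhh, h₂⟩ := alpha_eq_append_true_cons h₁
  obtain ⟨hh', u₃, rfl, hhh', -⟩ := alpha_eq_append_true_cons h₂
  obtain rfl : hh = hh' := alpha_injective hne (hhh.trans hhh'.symm)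
  exact ⟨x ++ [true], y, hh, by simp, by simpa using hhh, ⟨u₀, u₃, by simp⟩⟩

/-- if g³ is a factor of S = α(u) with u balanced, g primitive
of length ≥ 2, then some cyclic conjugate of g is block-complete: it equals
α(h) for some h with h² a factor of u. -/
theorem stmt10 (p p' : ℕ) (h : ValidPair p p') (u g : List Bool)
    (hbal : BalancedFin u) (hgprim : Primitive g) (hlen : 2 ≤ g.length)
    (hfac : listPow g 3 <:+: alpha p p' u) :
    ∃ x y hh : List Bool, g = x ++ y ∧ alpha p p' hh = y ++ x ∧
      (hh ++ hh) <:+: u :=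
  stmt10_general p p' h u g hgprim hlen hfac
end

section
/- If g^2 is a factor of a balanced infinite binary word, then g^2 is itself balanced, and moreover every cyclic conjugate g' of g satisfies that g'^2 is a factor of some balanced word; in particular, the period of a square factor of a Sturmian word is a conjugate of a balanced primitive word. -/
/-!
A window of length `q·n + r` of an `n`-periodic word contains `q` full periods and a
window of length `r < n` that lies inside the first `2n` letters. Hence an `n`-periodic
infinite word is balanced as soon as its prefix of length `2n` is; in particular, if `g²`
is balanced then so is the periodic word `g^ω`, and with it `g³ = x y x y x y`, which
contains `(y x)²`.
-/

open Function

section Windows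

variable (w : ℕ → Bool)

lemma length_infFactorAt (i n : ℕ) : (infFactorAt w i n).length = n := by
  simp [infFactorAt]

lemma infFactorAt_add (i a b : ℕ) :
    infFactorAt w i (a + b) = infFactorAt w i a ++ infFactorAt w (i + a) b := by
  simp only [infFactorAt, List.range_add, List.map_append, List.map_map]
  congr 1
  exact List.map_congr_left fun k _ => by simp [Nat.add_assoc]

lemma infFactorAt_one (i : ℕ) : infFactorAt w i 1 = [w i] := by
  simp [infFactorAt]

lemma infFactorAt_infix {i j m n : ℕ} (hij : i ≤ j) (hjm : j + m ≤ i + n) :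
    infFactorAt w j m <:+: infFactorAt w i n := by
  obtain ⟨a, rfl⟩ := Nat.exists_eq_add_of_le hij
  obtain ⟨b, rfl⟩ : ∃ b, n = a + m + b := ⟨n - a - m, by omega⟩
  exact ⟨infFactorAt w i a, infFactorAt w (i + a + m) b, by
    rw [infFactorAt_add, infFactorAt_add, Nat.add_assoc]⟩

lemma infFactor_infFactorAt (i n : ℕ) : InfFactor (infFactorAt w i n) w :=
  ⟨i, by rw [length_infFactorAt]⟩

end Windows

lemma InfFactor.of_infix {u v : List Bool} {w : ℕ → Bool} (huv : u <:+: v)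
    (hv : InfFactor v w) : InfFactor u w := by
  obtain ⟨s, t, rfl⟩ := huv
  obtain ⟨i, hi⟩ := hv
  rw [List.length_append, List.length_append, infFactorAt_add, infFactorAt_add] at hi
  obtain ⟨hsu, -⟩ := List.append_inj hi (by simp [length_infFactorAt])
  exact ⟨i + s.length, (List.append_inj hsu (length_infFactorAt w i _).symm).2⟩

lemma BalancedInf.balancedFin_of_infFactor {v : List Bool} {w : ℕ → Bool}
    (hw : BalancedInf w) (hv : InfFactor v w) : BalancedFin v :=
  fun _ _ hu hu' hl => hw _ _ (hv.of_infix hu) (hv.of_infix hu') hl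

section Periodic

variable {w : ℕ → Bool} {n : ℕ}

lemma Function.Periodic.infFactorAt_left (hw : Periodic w n) (m : ℕ) :
    Periodic (fun i => infFactorAt w i m) n :=
  fun i => by simp only [infFactorAt, Nat.add_right_comm i n, hw _]

lemma Function.Periodic.infFactorAt_mod (hw : Periodic w n) (i m : ℕ) :
    infFactorAt w (i % n) m = infFactorAt w i m := by
  conv_rhs => rw [← Nat.mod_add_div' i n]
  exact ((hw.infFactorAt_left m).nat_mul (i / n) (i % n)).symm

lemma Function.Periodic.count_infFactorAt_period (hw : Periodic w n) (i : ℕ) :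
    (infFactorAt w i n).count true = (infFactorAt w 0 n).count true := by
  induction i with
  | zero => rfl
  | succ i ih =>
    -- sliding the window by one drops `w i` and appends `w (i + n) = w i`
    have hslide : [w i] ++ infFactorAt w (i + 1) n = infFactorAt w i n ++ [w i] := by
      rw [← infFactorAt_one w i, ← infFactorAt_add, Nat.add_comm, infFactorAt_add,
        infFactorAt_one, infFactorAt_one, hw]
    have := congrArg (List.count true) hslide
    simp only [List.count_append] at this
    omega

lemma Function.Periodic.count_infFactorAt_mul (hw : Periodic w n) (q i : ℕ) :
    (infFactorAt w i (q * n)).count true = q * (infFactorAt w 0 n).count true := by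
  induction q generalizing i with
  | zero => simp [infFactorAt]
  | succ q ih =>
    rw [Nat.succ_mul, infFactorAt_add, List.count_append, ih,
      hw.count_infFactorAt_period (i + q * n)]
    ring

lemma Function.Periodic.balancedInf (hw : Periodic w n) (hn : 0 < n)
    (hb : BalancedFin (infFactorAt w 0 (n + n))) : BalancedInf w := by
  have hcount : ∀ i q r, (infFactorAt w i (q * n + r)).count true =
      q * (infFactorAt w 0 n).count true + (infFactorAt w ((i + q * n) % n) r).count true :=
    fun i q r => by
      rw [infFactorAt_add, List.count_append, hw.count_infFactorAt_mul, hw.infFactorAt_mod]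
  have hshort : ∀ i r, r < n → infFactorAt w (i % n) r <:+: infFactorAt w 0 (n + n) :=
    fun i r hr => infFactorAt_infix w (Nat.zero_le _) (by have := Nat.mod_lt i hn; omega)
  intro u v ⟨i, hu⟩ ⟨j, hv⟩ hl
  obtain ⟨q, r, hr, hlen⟩ : ∃ q r, r < n ∧ v.length = q * n + r :=
    ⟨_, _, Nat.mod_lt v.length hn, (Nat.div_add_mod' v.length n).symm⟩
  rw [hu, hv, hl, hlen, hcount, hcount]
  have := hb _ _ (hshort (i + q * n) r hr) (hshort (j + q * n) r hr)
    (by simp only [length_infFactorAt])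
  omega

end Periodic

def cyclicWord (g : List Bool) (k : ℕ) : Bool := g.getD (k % g.length) false

lemma periodic_cyclicWord (g : List Bool) : Periodic (cyclicWord g) g.length :=
  fun k => by simp [cyclicWord]

lemma infFactorAt_cyclicWord_zero (g : List Bool) :
    infFactorAt (cyclicWord g) 0 g.length = g := by
  apply List.ext_getElem (length_infFactorAt _ _ _)
  intro k _ hk
  simp [infFactorAt, cyclicWord, Nat.mod_eq_of_lt hk, List.getElem?_eq_getElem hk]

lemma infFactorAt_cyclicWord_mul (g : List Bool) (k : ℕ) :
    infFactorAt (cyclicWord g) 0 (k * g.length) = listPow g k := by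
  induction k with
  | zero => simp [infFactorAt, listPow]
  | succ k ih =>
    rw [Nat.succ_mul, infFactorAt_add, ih, Nat.zero_add,
      ← (periodic_cyclicWord g).infFactorAt_mod, Nat.mul_mod_left, infFactorAt_cyclicWord_zero]
    simp [listPow, List.replicate_succ']

lemma balancedFin_listPow {g : List Bool} (hg : BalancedFin (g ++ g)) (k : ℕ) :
    BalancedFin (listPow g k) := by
  obtain rfl | hne := eq_or_ne g []
  · simpa [listPow] using hg
  have hcyc : BalancedInf (cyclicWord g) := by
    refine (periodic_cyclicWord g).balancedInf (List.length_pos_iff.mpr hne) ?_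
    rw [← Nat.two_mul, infFactorAt_cyclicWord_mul]
    simpa [listPow] using hg
  rw [← infFactorAt_cyclicWord_mul]
  exact hcyc.balancedFin_of_infFactor (infFactor_infFactorAt _ _ _)

/-- a square factor g² of a balanced infinite word is itself
balanced, and the square of every cyclic conjugate of g is a factor of some
balanced word. -/
theorem stmt16 (w : ℕ → Bool) (hbal : BalancedInf w) (g : List Bool)
    (hfac : InfFactor (g ++ g) w) :
    BalancedFin (g ++ g) ∧
    ∀ x y : List Bool, g = x ++ y →
      ∃ w' : List Bool, BalancedFin w' ∧ ((y ++ x) ++ (y ++ x)) <:+: w' := by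
  have hsq : BalancedFin (g ++ g) := hbal.balancedFin_of_infFactor hfac
  refine ⟨hsq, fun x y hxy => ⟨listPow g 3, balancedFin_listPow hsq 3, x, y, ?_⟩⟩
  simp [hxy, listPow]
end
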